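/- arXiv:1304.6373 — 2 statements merged into one kernel-verified Lean document; each statement's English description precedes it below -/
import Mathlib

section
/- Let $A$ be a (graded) commutative unital algebra with an odd second-order differential operator $\Delta$ satisfying $\Delta^2 = 0$ and $\Delta(1) = 0$, and set $[a,b] = \Delta(ab) - \Delta(a)b - (-1)^{|a|}a\Delta(b)$. Then for any even nilpotent element $\xi \in A$, $\Delta(e^\xi) = e^\xi\left(\Delta(\xi) + \tfrac{1}{2}[\xi,\xi]\right)$. -/
open Finset

/-- The operator of multiplication by `a`. -/
noncomputable def mulOp (k : Type*) {A : Type*} [Field k] [CommRing A] [Algebra k A]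
    (a : A) : Module.End k A :=
  LinearMap.mulLeft k a

/-- Commutator of two operators. -/
def opComm {k A : Type*} [Field k] [CommRing A] [Algebra k A]
    (D E : Module.End k A) : Module.End k A :=
  D * E - E * D

/-- Iterated commutator `[[…[D,a₁]…],aₙ]` of an operator with multiplication operators. -/
noncomputable def itComm (k : Type*) {A : Type*} [Field k] [CommRing A] [Algebra k A]
    (D : Module.End k A) : List A → Module.End k A
  | [] => D
  | a :: l => itComm k (opComm D (mulOp k a)) l

/-- `DOp k (n+1)` is the set of differential operators of order at most `n`, in the
Grothendieck sense: `DOp k 0 = F₋₁ = {0}` and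
`Fₙ = DOp k (n+1) = {D | ∀ a, [D,a] ∈ Fₙ₋₁}`. -/
def DOp (k : Type*) {A : Type*} [Field k] [CommRing A] [Algebra k A] :
    ℕ → Set (Module.End k A)
  | 0 => {0}
  | n + 1 => {D | ∀ a : A, opComm D (mulOp k a) ∈ DOp k n}

/-- Truncated exponential; equals the full exponential when `ξ^N = 0`. -/
noncomputable def expT (k : Type*) {A : Type*} [Field k] [CommRing A] [Algebra k A]
    (N : ℕ) (ξ : A) : A :=
  ∑ n ∈ range N, (n.factorial : k)⁻¹ • ξ ^ n

/-!
A second-order operator `Δ` with `Δ(1) = 0` satisfies `Δ(ab) = Δ(a)b + aΔ(b) + [a,b]`, and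
`[a,·]` is a derivation. Multiplying by `X` step by step, this gives for every polynomial `p`
the Taylor formula `Δ(p(ξ)) = p'(ξ)Δ(ξ) + ½p''(ξ)[ξ,ξ]`. Apply it to the truncated
exponential `∑_{n<N+2} Xⁿ/n!`: its first and second derivatives are the truncations at `N+1`
and `N`, and since `ξ^N = 0` all three truncations evaluate to `e^ξ`.
-/

open Polynomial

section SecondOrder

variable {k A : Type*} [Field k] [CommRing A] [Algebra k A]

@[simp]
lemma opComm_mulOp_apply (D : Module.End k A) (a x : A) :
    opComm D (mulOp k a) x = D (a * x) - a * D x :=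
  rfl

lemma mem_DOp_three_iff {D : Module.End k A} :
    D ∈ DOp k 3 ↔
      ∀ a b c : A, opComm (opComm (opComm D (mulOp k a)) (mulOp k b)) (mulOp k c) = 0 :=
  Iff.rfl

variable (Δ : Module.End k A)

noncomputable def deltaBracket (a : A) : Module.End k A :=
  opComm Δ (mulOp k a) - mulOp k (Δ a)

lemma deltaBracket_apply (a b : A) : deltaBracket Δ a b = Δ (a * b) - Δ a * b - a * Δ b := by
  show Δ (a * b) - a * Δ b - Δ a * b = _
  ring

variable {Δ}

lemma deltaBracket_mul_right (hΔ : Δ ∈ DOp k 3) (h0 : Δ 1 = 0) (a b c : A) :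
    deltaBracket Δ a (b * c) = b * deltaBracket Δ a c + c * deltaBracket Δ a b := by
  have h := congrArg (fun D : Module.End k A => D 1) (mem_DOp_three_iff.1 hΔ a b c)
  simp only [opComm_mulOp_apply, LinearMap.zero_apply, mul_one, h0, mul_zero, sub_zero] at h
  simp only [deltaBracket_apply]
  linear_combination h

noncomputable def bracketDerivation (hΔ : Δ ∈ DOp k 3) (h0 : Δ 1 = 0) (a : A) :
    Derivation k A A :=
  Derivation.mk' (deltaBracket Δ a) (deltaBracket_mul_right hΔ h0 a)

variable [NeZero (2 : k)]

lemma map_aeval_X_mul (hΔ : Δ ∈ DOp k 3) (h0 : Δ 1 = 0) (ξ : A) {q : k[X]}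
    (hq : Δ (aeval ξ q) = aeval ξ (derivative q) * Δ ξ
      + (2 : k)⁻¹ • (aeval ξ (derivative (derivative q)) * deltaBracket Δ ξ ξ)) :
    Δ (aeval ξ (X * q)) = aeval ξ (derivative (X * q)) * Δ ξ
      + (2 : k)⁻¹ • (aeval ξ (derivative (derivative (X * q))) * deltaBracket Δ ξ ξ) := by
  have hleibniz : Δ (ξ * aeval ξ q) = Δ ξ * aeval ξ q + ξ * Δ (aeval ξ q)
      + aeval ξ (derivative q) * deltaBracket Δ ξ ξ := by
    have := (bracketDerivation hΔ h0 ξ).map_aeval q ξ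
    simp only [bracketDerivation, Derivation.coe_mk', smul_eq_mul] at this
    rw [← this, deltaBracket_apply]
    ring
  have htwo : algebraMap k A (2 : k)⁻¹ * 2 = 1 := by
    rw [← map_ofNat (algebraMap k A), ← map_mul, inv_mul_cancel₀ two_ne_zero, map_one]
  simp only [map_mul, aeval_X, derivative_mul, derivative_X, one_mul, map_add, hleibniz, hq,
    Algebra.smul_def]
  linear_combination -aeval ξ (derivative q) * deltaBracket Δ ξ ξ * htwo

theorem map_aeval_of_mem_DOp_three (hΔ : Δ ∈ DOp k 3) (h0 : Δ 1 = 0) (ξ : A) (p : k[X]) :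
    Δ (aeval ξ p) = aeval ξ (derivative p) * Δ ξ
      + (2 : k)⁻¹ • (aeval ξ (derivative (derivative p)) * deltaBracket Δ ξ ξ) := by
  induction p using Polynomial.induction_on with
  | C c => simp [Algebra.algebraMap_eq_smul_one, h0]
  | add p q hp hq => simp only [map_add, hp, hq, add_mul, smul_add]; abel
  | monomial n c hn =>
    rw [pow_succ, ← mul_assoc, mul_comm _ X]
    exact map_aeval_X_mul hΔ h0 ξ hn

end SecondOrder

section Exponential

variable (k : Type*) {A : Type*} [Field k] [CommRing A] [Algebra k A]

noncomputable def expPoly (N : ℕ) : k[X] :=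
  ∑ n ∈ range N, C (n.factorial : k)⁻¹ * X ^ n

lemma aeval_expPoly (N : ℕ) (ξ : A) : aeval ξ (expPoly k N) = expT k N ξ := by
  simp [expPoly, expT, Algebra.smul_def]

lemma derivative_expPoly [CharZero k] (N : ℕ) :
    derivative (expPoly k (N + 1)) = expPoly k N := by
  rw [expPoly, derivative_sum, sum_range_succ', pow_zero, mul_one, derivative_C, add_zero]
  refine Finset.sum_congr rfl fun n _ => ?_
  rw [derivative_C_mul_X_pow, Nat.add_sub_cancel, Nat.factorial_succ, Nat.cast_mul,
    mul_inv, mul_comm _ (n.factorial : k)⁻¹, mul_assoc,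
    inv_mul_cancel₀ (Nat.cast_ne_zero.2 n.succ_ne_zero), mul_one]

variable {k}

lemma expT_add_of_pow_eq_zero {ξ : A} {N : ℕ} (hξ : ξ ^ N = 0) (m : ℕ) :
    expT k (N + m) ξ = expT k N ξ := by
  simp [expT, sum_range_add, pow_add, hξ]

end Exponential

theorem stmt9_general {k A : Type*} [Field k] [CharZero k] [CommRing A] [Algebra k A]
    (Δ : Module.End k A)
    (h2 : ∀ a b c : A, opComm (opComm (opComm Δ (mulOp k a)) (mulOp k b)) (mulOp k c) = 0)
    (h0 : Δ 1 = 0)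
    (ξ : A) (N : ℕ) (hξ : ξ ^ N = 0) :
    Δ (expT k N ξ) =
      expT k N ξ * (Δ ξ + (2 : k)⁻¹ • (Δ (ξ * ξ) - Δ ξ * ξ - ξ * Δ ξ)) := by
  have hN : ∀ m, expT k (N + m) ξ = expT k N ξ := expT_add_of_pow_eq_zero hξ
  calc Δ (expT k N ξ) = Δ (aeval ξ (expPoly k (N + 2))) := by rw [aeval_expPoly, hN]
    _ = _ := by
      rw [map_aeval_of_mem_DOp_three (mem_DOp_three_iff.2 h2) h0, derivative_expPoly,
        derivative_expPoly, aeval_expPoly, aeval_expPoly, hN 1, deltaBracket_apply, mul_add,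
        mul_smul_comm]

/-- For a second-order operator `Δ` with `Δ² = 0`, `Δ(1) = 0`, bracket
`[a,b] = Δ(ab) - Δ(a)b - aΔ(b)` (for `a` even), and an even nilpotent `ξ`:
`Δ(e^ξ) = e^ξ (Δ(ξ) + ½[ξ,ξ])`.  (Formalized on the even part, i.e. for an ungraded
commutative algebra, where all Koszul signs are `+1`.) -/
theorem stmt9 {k A : Type*} [Field k] [CharZero k] [CommRing A] [Algebra k A]
    (Δ : Module.End k A)
    (h2 : ∀ a b c : A, opComm (opComm (opComm Δ (mulOp k a)) (mulOp k b)) (mulOp k c) = 0)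
    (h0 : Δ 1 = 0) (hsq : Δ * Δ = 0)
    (ξ : A) (N : ℕ) (hξ : ξ ^ N = 0) :
    Δ (expT k N ξ) =
      expT k N ξ * (Δ ξ + (2 : k)⁻¹ • (Δ (ξ * ξ) - Δ ξ * ξ - ξ * Δ ξ)) :=
  stmt9_general Δ h2 h0 ξ N hξ
end

section
/- Let $A$ be a unital commutative algebra over a field $k$ of characteristic zero and let $D_0, D_1, D_2, \dots$ be operators on $A$ such that each $D_i$ is a differential operator of order at most $i+1$, and $D = \sum_i h^i D_i$ on $A[[h]]$ satisfies $D^2 = 0$. Then writing the $D$-derived brackets $m_n(a_1, \dots, a_n) = [[\dots[D, a_1]\dots], a_n](1)$ for $a_i \in A \subseteq A[[h]]$, each $m_n$ takes values in $h^{n-1} A[[h]]$, so that $m_n / h^{n-1}$ is a well-defined map $A^{\otimes n} \to A[[h]]$. -/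
open Finset

/- The divisibility comes from the order filtration: the `n`-fold commutator of
`D = ∑ hⁱ Dᵢ` with constants is `∑ hⁱ [[…[Dᵢ,a₁]…],aₙ]`, and since `Dᵢ` has order at most
`i + 1`, its `n`-fold commutator vanishes as soon as `i + 2 ≤ n`. -/

section DOp

variable {k A : Type*} [Field k] [CommRing A] [Algebra k A]

lemma opComm_mem_DOp_pred {D : Module.End k A} {j : ℕ} (hD : D ∈ DOp k j) (a : A) :
    opComm D (mulOp k a) ∈ DOp k (j - 1) := by
  cases j with
  | zero =>
    rw [DOp, Set.mem_singleton_iff] at hD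
    simp [hD, opComm, DOp]
  | succ j => exact hD a

lemma itComm_mem_DOp {D : Module.End k A} {j : ℕ} (hD : D ∈ DOp k j) (l : List A) :
    itComm k D l ∈ DOp k (j - l.length) := by
  induction l generalizing D j with
  | nil => simpa [itComm] using hD
  | cons a l ih =>
    simpa [itComm, Nat.sub_sub, Nat.add_comm] using ih (opComm_mem_DOp_pred hD a)

lemma itComm_eq_zero_of_mem_DOp {D : Module.End k A} {j : ℕ} (hD : D ∈ DOp k j)
    {l : List A} (hl : j ≤ l.length) : itComm k D l = 0 := by
  simpa [Nat.sub_eq_zero_of_le hl, DOp] using itComm_mem_DOp hD l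

end DOp

section Expansion

open PowerSeries

variable {k A : Type*} [Field k] [CommRing A] [Algebra k A]

/-- `D` acts on `A⟦X⟧` as `∑ Xⁱ Dᵢ`. -/
def HasExpansion (D : Module.End k A⟦X⟧) (Di : ℕ → Module.End k A) : Prop :=
  ∀ (f : A⟦X⟧) (m : ℕ), coeff m (D f) = ∑ i ∈ range (m + 1), Di i (coeff (m - i) f)

lemma HasExpansion.opComm_C {D : Module.End k A⟦X⟧} {Di : ℕ → Module.End k A}
    (hD : HasExpansion D Di) (a : A) :
    HasExpansion (opComm D (mulOp k (C a))) fun i => opComm (Di i) (mulOp k a) := by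
  intro f m
  simp only [opComm, mulOp, LinearMap.sub_apply, Module.End.mul_apply,
    LinearMap.mulLeft_apply, map_sub, coeff_C_mul, hD _ m, mul_sum, ← sum_sub_distrib]

lemma HasExpansion.itComm_C {D : Module.End k A⟦X⟧} {Di : ℕ → Module.End k A}
    (hD : HasExpansion D Di) (l : List A) :
    HasExpansion (itComm k D (l.map C)) fun i => itComm k (Di i) l := by
  induction l generalizing D Di with
  | nil => exact hD
  | cons a l ih => exact ih (hD.opComm_C a)

end Expansion

theorem stmt19_general {k A : Type*} [Field k] [CommRing A] [Algebra k A]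
    (Di : ℕ → Module.End k A)
    (hDi : ∀ i : ℕ, Di i ∈ DOp k (i + 2))
    (D : Module.End k (PowerSeries A))
    (hD : ∀ (f : PowerSeries A) (m : ℕ),
      PowerSeries.coeff (R := A) m (D f) =
        ∑ i ∈ Finset.range (m + 1), Di i (PowerSeries.coeff (R := A) (m - i) f))
    (n : ℕ) (l : List A) (hl : l.length = n) :
    (PowerSeries.X : PowerSeries A) ^ (n - 1) ∣
      itComm k D (l.map fun a => PowerSeries.C (R := A) a) 1 := by
  rw [PowerSeries.X_pow_dvd_iff]
  intro m hm
  rw [HasExpansion.itComm_C hD l]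
  refine sum_eq_zero fun i hi => ?_
  have hn : i + 2 ≤ l.length := by
    rw [mem_range] at hi
    omega
  simp only [itComm_eq_zero_of_mem_DOp (hDi i) hn, LinearMap.zero_apply]

/-- Let `A` be a unital commutative algebra over a field `k` of characteristic zero and
`D₀, D₁, D₂, …` operators on `A` with `Dᵢ` a differential operator of order at most
`i+1` (i.e. `Dᵢ ∈ DOp k (i+2)`).  Let `D = ∑ hⁱ Dᵢ` be the induced operator on
`A[[h]]` (characterized coefficientwise: `(D f)ₘ = ∑_{i≤m} Dᵢ(f_{m-i})`), and suppose
`D² = 0`.  Then each derived bracket `mₙ(a₁,…,aₙ) = [[…[D,a₁]…],aₙ](1)` with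
`aᵢ ∈ A ⊆ A[[h]]` takes values in `h^{n-1} A[[h]]`, i.e. is divisible by `X^{n-1}`,
so that `mₙ/h^{n-1}` is a well-defined map `Aⁿ → A[[h]]`. -/
theorem stmt19 {k A : Type*} [Field k] [CharZero k] [CommRing A] [Algebra k A]
    (Di : ℕ → Module.End k A)
    (hDi : ∀ i : ℕ, Di i ∈ DOp k (i + 2))
    (D : Module.End k (PowerSeries A))
    (hD : ∀ (f : PowerSeries A) (m : ℕ),
      PowerSeries.coeff (R := A) m (D f) =
        ∑ i ∈ Finset.range (m + 1), Di i (PowerSeries.coeff (R := A) (m - i) f))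
    (hsq : D * D = 0)
    (n : ℕ) (l : List A) (hl : l.length = n) :
    (PowerSeries.X : PowerSeries A) ^ (n - 1) ∣
      itComm k D (l.map fun a => PowerSeries.C (R := A) a) 1 :=
  stmt19_general Di hDi D hD n l hl
end
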